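/- arXiv:2407.06675 — 5 statements merged into one kernel-verified Lean document; each statement's English description precedes it below -/
import Mathlib

section
/- Let 0 < d ≪ μ ≤ τ ≤ 1/100 be reals and let R be a digraph on k vertices with minimum semi-degree δ⁰(R) ≥ (3/8 − 3d)k. If R is a robust (μ, 1/3)-outexpander (i.e. |N⁺_R(S)| ≥ |S| + μk for every S ⊆ V(R) with k/3 ≤ |S| ≤ 2k/3), then R is a robust (μ, τ)-outexpander (i.e. |N⁺_R(S)| ≥ |S| + μk for every S with τk ≤ |S| ≤ (1 − τ)k). -/
open Finset

theorem stmt0 {V : Type*} [Fintype V] [DecidableEq V] (A : V → V → Prop) [DecidableRel A]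
    (d μ τ : ℝ) (hd : 0 < d) (hdμ : d < μ) (hμτ : μ ≤ τ) (hτ : τ ≤ 1/100)
    (k : ℕ) (hk : k = Fintype.card V)
    (hdeg : ∀ v : V, (3/8 - 3*d) * k ≤ ((univ.filter (fun u => A v u)).card : ℝ) ∧
      (3/8 - 3*d) * k ≤ ((univ.filter (fun u => A u v)).card : ℝ))
    (hcalc : (k : ℝ)/3 + k/100 + μ * k ≤ (3/8 - 3*d) * k)
    (hexp : ∀ S : Finset V, (k : ℝ)/3 ≤ S.card → (S.card : ℝ) ≤ 2*k/3 →
      (S.card : ℝ) + μ * k ≤ ((S.biUnion (fun v => univ.filter (fun u => A v u))).card : ℝ)) :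
    ∀ S : Finset V, τ * k ≤ S.card → (S.card : ℝ) ≤ (1 - τ) * k →
      (S.card : ℝ) + μ * k ≤ ((S.biUnion (fun v => univ.filter (fun u => A v u))).card : ℝ) := by
  intro S hS1 hS2
  by_cases h1 : (k:ℝ)/3 ≤ S.card
  · by_cases h2 : (S.card : ℝ) ≤ 2*k/3
    · exact hexp S h1 h2
    · push_neg at h2
      have hall : S.biUnion (fun v => univ.filter (fun u => A v u)) = univ := by
        ext v
        simp only [mem_biUnion, mem_univ, mem_filter, true_and, iff_true]
        by_contra hc
        push_neg at hc
        have hdisj : Disjoint S (univ.filter (fun u => A u v)) := by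
          rw [Finset.disjoint_left]
          intro w hw hw'
          exact hc w hw (by simpa using hw')
        have hcard : S.card + (univ.filter (fun u => A u v)).card ≤ k := by
          rw [← Finset.card_union_of_disjoint hdisj, hk]
          exact Finset.card_le_univ _
        have hcard' : (S.card : ℝ) + ((univ.filter (fun u => A u v)).card : ℝ) ≤ k := by
          exact_mod_cast hcard
        have hmuk : (0:ℝ) ≤ μ * k := mul_nonneg (by linarith) (Nat.cast_nonneg _)
        have h100 : (0:ℝ) ≤ (k:ℝ)/100 := by positivity
        have := (hdeg v).2
        nlinarith
      rw [hall, hk]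
      rw [hk] at hS2
      have hμk : μ * (Fintype.card V : ℝ) ≤ τ * (Fintype.card V : ℝ) := by
        have : (0:ℝ) ≤ (Fintype.card V : ℝ) := Nat.cast_nonneg _
        nlinarith
      simp only [Finset.card_univ]
      nlinarith
  · push_neg at h1
    have hk0 : (0:ℝ) < k := by
      by_contra hc
      push_neg at hc
      have : (k:ℝ) = 0 := le_antisymm hc (Nat.cast_nonneg _)
      rw [this] at h1
      simp at h1
      exact absurd (Nat.cast_nonneg S.card : (0:ℝ) ≤ S.card) (not_le.mpr h1)
    have hne : S.Nonempty := by
      rw [← Finset.card_pos]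
      have : (0:ℝ) < S.card := lt_of_lt_of_le (by nlinarith : (0:ℝ) < τ * k) hS1
      exact_mod_cast this
    obtain ⟨v, hv⟩ := hne
    have hsub : univ.filter (fun u => A v u) ⊆ S.biUnion (fun v => univ.filter (fun u => A v u)) :=
      Finset.subset_biUnion_of_mem (fun w => univ.filter (fun u => A w u)) hv
    have hcard := Finset.card_le_card hsub
    have hcard' : ((univ.filter (fun u => A v u)).card : ℝ) ≤
        ((S.biUnion (fun v => univ.filter (fun u => A v u))).card : ℝ) := by exact_mod_cast hcard
    have := (hdeg v).1
    nlinarith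
end

section
/- Let D be an oriented graph on m ≥ 4 vertices that contains no directed path on 4 vertices. Then the number of arcs of D satisfies a(D) ≤ C(m,2) − C(m,4)/C(m,2), where C(a,b) denotes the binomial coefficient. -/
open Finset

private lemma pairEq {V : Type*} [DecidableEq V] {u v a b : V} (huv : u ≠ v)
    (h : ({u, v} : Finset V) = {a, b}) : (u = a ∧ v = b) ∨ (u = b ∧ v = a) := by
  have h' : ({u, v} : Set V) = {a, b} := by
    have := congrArg (fun s : Finset V => (s : Set V)) h
    simpa using this
  exact Set.pair_eq_pair_iff.mp h' 

private lemma path3 {V : Type*} (A : V → V → Prop)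
    (a b c : V) (hab : A a b ∨ A b a) (hac : A a c ∨ A c a) (hbc : A b c ∨ A c b)
    (hab' : a ≠ b) (hac' : a ≠ c) (hbc' : b ≠ c) :
    ∃ x y z : V, x ≠ y ∧ x ≠ z ∧ y ≠ z ∧
      x ∈ ({a, b, c} : Set V) ∧ y ∈ ({a, b, c} : Set V) ∧ z ∈ ({a, b, c} : Set V) ∧
      A x y ∧ A y z := by
  rcases hab with h1 | h1
  · rcases hbc with h2 | h2
    · exact ⟨a, b, c, hab', hac', hbc', by simp, by simp, by simp, h1, h2⟩
    · rcases hac with h3 | h3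
      · exact ⟨a, c, b, hac', hab', fun h => hbc' h.symm, by simp, by simp, by simp, h3, h2⟩
      · exact ⟨c, a, b, fun h => hac' h.symm, fun h => hbc' h.symm, hab', by simp, by simp, by simp, h3, h1⟩
  · rcases hac with h2 | h2
    · rcases hbc with h3 | h3
      · exact ⟨b, a, c, fun h => hab' h.symm, hbc', hac', by simp, by simp, by simp, h1, h2⟩
      · exact ⟨c, b, a, fun h => hbc' h.symm, fun h => hac' h.symm, fun h => hab' h.symm,
          by simp, by simp, by simp, h3, h1⟩
    · rcases hbc with h3 | h3
      · exact ⟨b, c, a, hbc', fun h => hab' h.symm, fun h => hac' h.symm,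
          by simp, by simp, by simp, h3, h2⟩
      · exact ⟨c, b, a, fun h => hbc' h.symm, fun h => hac' h.symm, fun h => hab' h.symm,
          by simp, by simp, by simp, h3, h1⟩

private lemma tourn4 {V : Type*} (A : V → V → Prop)
    (hnopath : ¬ ∃ p₁ p₂ p₃ p₄ : V, p₁ ≠ p₂ ∧ p₁ ≠ p₃ ∧ p₁ ≠ p₄ ∧ p₂ ≠ p₃ ∧ p₂ ≠ p₄ ∧ p₃ ≠ p₄ ∧
      A p₁ p₂ ∧ A p₂ p₃ ∧ A p₃ p₄)
    (a b c d : V) (hab : a ≠ b) (hac : a ≠ c) (had : a ≠ d) (hbc : b ≠ c) (hbd : b ≠ d)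
    (hcd : c ≠ d)
    (adj : ∀ u v : V, u ∈ ({a, b, c, d} : Set V) → v ∈ ({a, b, c, d} : Set V) → u ≠ v →
      A u v ∨ A v u) : False := by
  obtain ⟨x, y, z, hxy, hxz, hyz, hx, hy, hz, hAxy, hAyz⟩ :=
    path3 A a b c
      (adj a b (by simp) (by simp) hab) (adj a c (by simp) (by simp) hac)
      (adj b c (by simp) (by simp) hbc)
      hab hac hbc
  have hmem : ∀ w ∈ ({a, b, c} : Set V), w ∈ ({a, b, c, d} : Set V) ∧ w ≠ d := by
    rintro w (rfl | rfl | rfl)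
    · exact ⟨by simp, had⟩
    · exact ⟨by simp, hbd⟩
    · exact ⟨by simp, hcd⟩
  obtain ⟨hx4, hxd⟩ := hmem x hx
  obtain ⟨hy4, hyd⟩ := hmem y hy
  obtain ⟨hz4, hzd⟩ := hmem z hz
  have hd4 : d ∈ ({a, b, c, d} : Set V) := by simp
  apply hnopath
  rcases adj z d hz4 hd4 hzd with h1 | h1
  · exact ⟨x, y, z, d, hxy, hxz, hxd, hyz, hyd, hzd, hAxy, hAyz, h1⟩
  · rcases adj d x hd4 hx4 (Ne.symm hxd) with h2 | h2
    · exact ⟨d, x, y, z, Ne.symm hxd, Ne.symm hyd, Ne.symm hzd, hxy, hxz, hyz, h2, hAxy, hAyz⟩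
    · rcases adj y d hy4 hd4 hyd with h3 | h3
      · exact ⟨x, y, d, z, hxy, hxd, hxz, hyd, hyz, Ne.symm hzd, hAxy, h3, h1⟩
      · exact ⟨x, d, y, z, hxd, hxy, hxz, Ne.symm hyd, Ne.symm hzd, hyz, h2, h3, hAyz⟩

theorem stmt3 {V : Type*} [Fintype V] [DecidableEq V] (A : V → V → Prop) [DecidableRel A]
    (m : ℕ) (hm : m = Fintype.card V) (hm4 : 4 ≤ m)
    (horient : ∀ u v : V, A u v → ¬ A v u)
    (hnopath : ¬ ∃ p₁ p₂ p₃ p₄ : V, p₁ ≠ p₂ ∧ p₁ ≠ p₃ ∧ p₁ ≠ p₄ ∧ p₂ ≠ p₃ ∧ p₂ ≠ p₄ ∧ p₃ ≠ p₄ ∧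
      A p₁ p₂ ∧ A p₂ p₃ ∧ A p₃ p₄) :
    (((univ ×ˢ univ).filter (fun p : V × V => A p.1 p.2)).card : ℝ) ≤
      (m.choose 2 : ℝ) - (m.choose 4 : ℝ) / (m.choose 2 : ℝ) := by
  have hirr : ∀ u : V, ¬ A u u := fun u h => horient u u h h
  set P := (univ ×ˢ univ).filter (fun p : V × V => A p.1 p.2) with hP
  have hPmem : ∀ p : V × V, p ∈ P ↔ A p.1 p.2 := by
    intro p; simp [hP]
  set S := P.image (fun p : V × V => ({p.1, p.2} : Finset V)) with hS
  -- arcs ↔ edges bijection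
  have hcardS : S.card = P.card := by
    rw [hS]
    apply card_image_of_injOn
    intro p hp q hq hpq
    have hAp : A p.1 p.2 := (hPmem p).1 hp
    have hAq : A q.1 q.2 := (hPmem q).1 hq
    have hne : p.1 ≠ p.2 := fun h => hirr p.1 (h ▸ hAp)
    rcases pairEq hne hpq with ⟨h1, h2⟩ | ⟨h1, h2⟩
    · exact Prod.ext h1 h2
    · exact absurd hAp (h1 ▸ h2 ▸ horient q.1 q.2 hAq)
  have hSsub : S ⊆ powersetCard 2 (univ : Finset V) := by
    intro e he
    rw [hS, mem_image] at he
    obtain ⟨p, hp, rfl⟩ := he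
    have hAp : A p.1 p.2 := (hPmem p).1 hp
    have hne : p.1 ≠ p.2 := fun h => hirr p.1 (h ▸ hAp)
    rw [mem_powersetCard]
    exact ⟨subset_univ _, card_pair hne⟩
  set N := (powersetCard 2 (univ : Finset V)) \ S with hN
  have hcard2 : (powersetCard 2 (univ : Finset V)).card = m.choose 2 := by
    rw [card_powersetCard, card_univ, hm]
  have hNcard : N.card + S.card = m.choose 2 := by
    rw [hN, card_sdiff_of_subset hSsub, hcard2]
    exact Nat.sub_add_cancel (hcard2 ▸ card_le_card hSsub)
  -- every 4-subset contains a non-adjacent pair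
  have hkey : ∀ T ∈ powersetCard 4 (univ : Finset V), ∃ e ∈ N, e ⊆ T := by
    intro T hT
    rw [mem_powersetCard] at hT
    obtain ⟨hTu, hT4⟩ := hT
    -- extract 4 distinct elements
    obtain ⟨d, hd⟩ : ∃ d, d ∈ T := card_pos.1 (by omega)
    have h3 : (T.erase d).card = 3 := by rw [card_erase_of_mem hd, hT4]
    obtain ⟨a, b, c, hab, hac, hbc, habc⟩ := card_eq_three.1 h3
    have had : a ≠ d ∧ b ≠ d ∧ c ≠ d ∧ a ∈ T ∧ b ∈ T ∧ c ∈ T := by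
      have ha : a ∈ T.erase d := habc ▸ (by simp)
      have hb : b ∈ T.erase d := habc ▸ (by simp)
      have hc : c ∈ T.erase d := habc ▸ (by simp)
      rw [mem_erase] at ha hb hc
      exact ⟨ha.1, hb.1, hc.1, ha.2, hb.2, hc.2⟩
    obtain ⟨had, hbd, hcd, haT, hbT, hcT⟩ := had
    by_contra hcon
    push_neg at hcon
    have hadj : ∀ u v : V, u ∈ T → v ∈ T → u ≠ v → A u v ∨ A v u := by
      intro u v huT hvT huv
      by_contra h
      push_neg at h
      refine hcon ({u, v} : Finset V) ?_ ?_
      · rw [hN, mem_sdiff]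
        refine ⟨mem_powersetCard.2 ⟨subset_univ _, card_pair huv⟩, ?_⟩
        intro hmem
        rw [hS, mem_image] at hmem
        obtain ⟨p, hp, hpe⟩ := hmem
        have hAp : A p.1 p.2 := (hPmem p).1 hp
        have hne : p.1 ≠ p.2 := fun h' => hirr p.1 (h' ▸ hAp)
        rcases pairEq hne hpe with ⟨h1, h2⟩ | ⟨h1, h2⟩
        · exact h.1 (h1 ▸ h2 ▸ hAp)
        · exact h.2 (h1 ▸ h2 ▸ hAp)
      · intro x hx
        rcases mem_insert.1 hx with rfl | hx
        · exact huT
        · exact (mem_singleton.1 hx) ▸ hvT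
    have hTof : ∀ w ∈ ({a, b, c, d} : Set V), w ∈ T := by
      rintro w (rfl | rfl | rfl | rfl)
      · exact haT
      · exact hbT
      · exact hcT
      · exact hd
    exact tourn4 A hnopath a b c d hab hac had hbc hbd hcd
      (fun u v hu hv huv => hadj u v (hTof u hu) (hTof v hv) huv)
  -- counting
  have hcount : m.choose 4 ≤ N.card * m.choose 2 := by
    have hsub : powersetCard 4 (univ : Finset V) ⊆
        N.biUnion (fun e => (powersetCard 4 (univ : Finset V)).filter (fun T => e ⊆ T)) := by
      intro T hT
      obtain ⟨e, heN, heT⟩ := hkey T hT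
      exact mem_biUnion.2 ⟨e, heN, mem_filter.2 ⟨hT, heT⟩⟩
    have h1 : (powersetCard 4 (univ : Finset V)).card ≤
        ∑ e ∈ N, ((powersetCard 4 (univ : Finset V)).filter (fun T => e ⊆ T)).card :=
      le_trans (card_le_card hsub) card_biUnion_le
    have h2 : ∀ e ∈ N,
        ((powersetCard 4 (univ : Finset V)).filter (fun T => e ⊆ T)).card ≤ m.choose 2 := by
      intro e heN
      have he2 : e.card = 2 := (mem_powersetCard.1 (mem_sdiff.1 heN).1).2
      have hinj : Set.InjOn (fun T => T \ e)
          ((powersetCard 4 (univ : Finset V)).filter (fun T => e ⊆ T)) := by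
        intro T1 hT1 T2 hT2 h12
        have h12' : T1 \ e ∪ e = T2 \ e ∪ e := by
          simp only at h12
          rw [h12]
        rwa [sdiff_union_of_subset (mem_filter.1 hT1).2,
          sdiff_union_of_subset (mem_filter.1 hT2).2] at h12'
      rw [← card_image_of_injOn hinj]
      have himg : ((powersetCard 4 (univ : Finset V)).filter (fun T => e ⊆ T)).image
          (fun T => T \ e) ⊆ powersetCard 2 (univ : Finset V) := by
        intro x hx
        rw [mem_image] at hx
        obtain ⟨T, hT, rfl⟩ := hx
        rw [mem_filter, mem_powersetCard] at hT
        rw [mem_powersetCard]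
        refine ⟨subset_univ _, ?_⟩
        rw [card_sdiff_of_subset hT.2, hT.1.2, he2]
      exact hcard2 ▸ card_le_card himg
    calc m.choose 4 = (powersetCard 4 (univ : Finset V)).card := by
          rw [card_powersetCard, card_univ, hm]
      _ ≤ ∑ e ∈ N, ((powersetCard 4 (univ : Finset V)).filter (fun T => e ⊆ T)).card := h1
      _ ≤ ∑ _e ∈ N, m.choose 2 := sum_le_sum h2
      _ = N.card * m.choose 2 := by rw [sum_const, smul_eq_mul]
  -- final arithmetic
  have hC2pos : 0 < m.choose 2 := Nat.choose_pos (by omega)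
  have hC2pos' : (0 : ℝ) < (m.choose 2 : ℝ) := by exact_mod_cast hC2pos
  have hPeq : (P.card : ℝ) = (m.choose 2 : ℝ) - (N.card : ℝ) := by
    have : N.card + P.card = m.choose 2 := by rw [← hcardS]; exact hNcard
    have := congrArg (fun k : ℕ => (k : ℝ)) this
    push_cast at this
    linarith
  rw [hPeq]
  have hdiv : (m.choose 4 : ℝ) / (m.choose 2 : ℝ) ≤ (N.card : ℝ) := by
    rw [div_le_iff₀ hC2pos']
    exact_mod_cast hcount
  linarith
end

section
/- Let D be a digraph, u, v two distinct vertices of D, and let D' be the digraph obtained from D by deleting u and v and adding a new vertex p with N⁺_{D'}(p) ⊆ N⁺_D(u) \ {v} and N⁻_{D'}(p) ⊆ N⁻_D(v) \ {u}. If D' contains a (directed) Hamiltonian cycle, then D contains a directed path from u to v that visits every vertex of V(D) \ {u, v} exactly once, i.e. a path of length |V(D)| − 1 (with |V(D')| vertices plus the two endpoints u, v replacing p). -/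
open Finset

private theorem stmt6.cyc_of_chain' {α : Type*} {R : α → α → Prop} {l : List α}
    (h1 : l.Chain' R) (h2 : ∀ h : l ≠ [], R (l.getLast h) (l.head h)) :
    Cycle.Chain R ↑l := by
  cases l with
  | nil => simp
  | cons x t =>
    rw [Cycle.chain_coe_cons]
    have hne : (x :: t) ≠ [] := by simp
    have hch : List.Chain' R ((x :: t) ++ [x]) := by
      rw [List.Chain', List.isChain_append]
      refine ⟨h1, List.isChain_singleton x, ?_⟩
      intro p hp q hq
      rw [List.getLast?_eq_getLast hne] at hp
      simp at hp hq
      subst hp; subst hq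
      exact h2 hne
    exact hch

theorem stmt6 {V : Type*} [Fintype V] [DecidableEq V] (A : V → V → Prop)
    (u v : V) (huv : u ≠ v)
    (A' : Option {x : V // x ≠ u ∧ x ≠ v} → Option {x : V // x ≠ u ∧ x ≠ v} → Prop)
    (hsame : ∀ a b : {x : V // x ≠ u ∧ x ≠ v}, A' (some a) (some b) ↔ A (a : V) (b : V))
    (hout : ∀ b : {x : V // x ≠ u ∧ x ≠ v}, A' none (some b) → A u (b : V))
    (hin : ∀ a : {x : V // x ≠ u ∧ x ≠ v}, A' (some a) none → A (a : V) v)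
    (hloop : ¬ A' none none)
    (hham : ∃ c : List (Option {x : V // x ≠ u ∧ x ≠ v}), c ≠ [] ∧ c.Nodup ∧ c.Chain' A' ∧
      (∀ (h : c ≠ []), A' (c.getLast h) (c.head h)) ∧ ∀ w, w ∈ c) :
    ∃ P : List V, P.Nodup ∧ P.Chain' A ∧ P.head? = some u ∧ P.getLast? = some v ∧
      ∀ w : V, w ∈ P := by
  classical
  obtain ⟨c, hne, hnd, hch, hcyc, hall⟩ := hham
  obtain ⟨a, b, hc⟩ := List.append_of_mem (hall none)
  subst hc
  set g : Option {x : V // x ≠ u ∧ x ≠ v} → V := fun o => o.elim u Subtype.val with hg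
  -- rotate the cycle so that `none` comes first
  have hrot : (a ++ none :: b) ~r (none :: (b ++ a)) := by
    simpa using (List.isRotated_append (l := a) (l' := none :: b))
  have hCC : Cycle.Chain A' ↑(a ++ none :: b) := stmt6.cyc_of_chain' hch hcyc
  have hCC2 : Cycle.Chain A' ↑(none :: (b ++ a)) :=
    (Cycle.coe_eq_coe.2 hrot) ▸ hCC
  have hchain : List.Chain A' none ((b ++ a) ++ [none]) := (Cycle.chain_coe_cons _ _ _).1 hCC2
  have hnd2 : (none :: (b ++ a)).Nodup := hrot.perm.nodup hnd
  rw [List.nodup_cons] at hnd2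
  obtain ⟨hnone, hndL⟩ := hnd2
  set L := b ++ a with hL
  -- auxiliary chain transfer
  have aux : ∀ (M : List (Option {x : V // x ≠ u ∧ x ≠ v})) (x : {x : V // x ≠ u ∧ x ≠ v}),
      none ∉ M → List.Chain A' (some x) (M ++ [none]) → List.Chain A (x : V) (M.map g ++ [v]) := by
    intro M
    induction M with
    | nil =>
      intro x _ h
      rw [List.nil_append] at h; replace h := List.chain_cons.1 h
      exact List.Chain.cons (hin x h.1) List.Chain.nil
    | cons o M ih =>
      intro x hn h
      match o with
      | none => exact absurd (by simp) hn
      | some y =>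
        rw [List.cons_append] at h; replace h := List.chain_cons.1 h
        exact List.Chain.cons ((hsame x y).1 h.1) (ih y (fun hm => hn (List.mem_cons_of_mem _ hm)) h.2)
  -- every element of L is a `some`
  have hmemL : ∀ w ∈ L.map g, w ≠ u ∧ w ≠ v := by
    intro w hw
    rw [List.mem_map] at hw
    obtain ⟨o, ho, rfl⟩ := hw
    match o with
    | none => exact absurd ho hnone
    | some y => exact y.2
  refine ⟨u :: L.map g ++ [v], ?_, ?_, rfl, ?_, ?_⟩
  · -- Nodup
    rw [List.cons_append, List.nodup_cons]
    constructor
    · intro hu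
      rcases List.mem_append.1 hu with h | h
      · exact (hmemL u h).1 rfl
      · exact huv (by simpa using h)
    · rw [List.nodup_append]
      refine ⟨?_, List.nodup_singleton v, ?_⟩
      · refine List.Nodup.map_on ?_ hndL
        intro x hx y hy hxy
        match x, y with
        | some x, some y => exact congrArg some (Subtype.ext hxy)
        | none, _ => exact absurd hx hnone
        | _, none => exact absurd hy hnone
      · intro w hw w' hw' hww
        exact (hmemL w hw).2 (by simpa [hww] using hw')
  · -- Chain'
    show List.Chain A u (L.map g ++ [v])
    match hL' : L, hchain with
    | [], hchain =>
      rw [List.nil_append] at hchain; replace hchain := List.chain_cons.1 hchain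
      exact absurd hchain.1 hloop
    | o :: M, hchain =>
      match o with
      | none => exact absurd (by simp) hnone
      | some y =>
        rw [List.cons_append] at hchain; replace hchain := List.chain_cons.1 hchain
        exact List.Chain.cons (hout y hchain.1)
          (aux M y (fun hm => hnone (List.mem_cons_of_mem _ hm)) hchain.2)
  · -- getLast?
    show ((u :: L.map g) ++ [v]).getLast? = some v
    exact List.getLast?_concat
  · -- membership
    intro w
    by_cases hwu : w = u
    · subst hwu; exact List.mem_cons_self
    by_cases hwv : w = v
    · subst hwv; simp
    have : some ⟨w, hwu, hwv⟩ ∈ none :: L := hrot.perm.subset (hall _)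
    rcases List.mem_cons.1 this with h | h
    · exact absurd h.symm (by simp)
    · refine List.mem_cons_of_mem _ (List.mem_append.2 (Or.inl ?_))
      exact List.mem_map.2 ⟨_, h, rfl⟩
end

section
/- Let D be an oriented graph on n vertices with minimum semi-degree δ⁰(D) ≥ n/3 + 1. Then for every vertex x ∈ V(D) there exists a vertex y such that D contains an xy-butterfly, i.e. vertices x, y, z, a, b (distinct) with arcs xa, xz, az, zb, zy, by all present in D. -/
open Finset

theorem stmt16 {V : Type*} [Fintype V] [DecidableEq V] (Adj : V → V → Prop) [DecidableRel Adj]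
    (horient : ∀ a b : V, Adj a b → ¬ Adj b a)
    (n : ℕ) (hn : n = Fintype.card V)
    (hdeg : ∀ w : V, (n : ℝ)/3 + 1 ≤ ((univ.filter (fun z => Adj w z)).card : ℝ) ∧
      (n : ℝ)/3 + 1 ≤ ((univ.filter (fun z => Adj z w)).card : ℝ)) :
    ∀ x : V, ∃ y z a b : V,
      [x, y, z, a, b].Nodup ∧
      Adj x a ∧ Adj x z ∧ Adj a z ∧ Adj z b ∧ Adj z y ∧ Adj b y := by
  have hnn : (0:ℝ) ≤ (n:ℝ) := Nat.cast_nonneg n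
  have key : ∀ w : V, ∃ a z : V, Adj w a ∧ Adj w z ∧ Adj a z := by
    intro w
    by_contra h
    push_neg at h
    have hpos : 0 < (univ.filter (fun z => Adj w z)).card := by
      have h1 := (hdeg w).1
      have : (0:ℝ) < ((univ.filter (fun z => Adj w z)).card : ℝ) := by linarith
      exact_mod_cast this
    obtain ⟨z, hz⟩ := Finset.card_pos.mp hpos
    simp only [mem_filter, mem_univ, true_and] at hz
    set A := univ.filter (fun u => Adj w u) with hA
    set B := univ.filter (fun u => Adj z u) with hB
    set C := univ.filter (fun u => Adj u z) with hC
    have hAB : Disjoint A B := by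
      rw [Finset.disjoint_left]
      intro u hu hu'
      simp only [hA, hB, mem_filter, mem_univ, true_and] at hu hu'
      exact h z u hz hu hu'
    have hAC : Disjoint A C := by
      rw [Finset.disjoint_left]
      intro u hu hu'
      simp only [hA, hC, mem_filter, mem_univ, true_and] at hu hu'
      exact h u z hu hz hu'
    have hBC : Disjoint B C := by
      rw [Finset.disjoint_left]
      intro u hu hu'
      simp only [hB, hC, mem_filter, mem_univ, true_and] at hu hu'
      exact horient z u hu hu'
    have hsum : A.card + B.card + C.card ≤ n := by
      have hd : Disjoint A (B ∪ C) := Finset.disjoint_union_right.mpr ⟨hAB, hAC⟩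
      have h1 : (A ∪ (B ∪ C)).card = A.card + (B.card + C.card) := by
        rw [Finset.card_union_of_disjoint hd, Finset.card_union_of_disjoint hBC]
      have h2 : (A ∪ (B ∪ C)).card ≤ Fintype.card V :=
        Finset.card_le_card (Finset.subset_univ _)
      omega
    have c1 := (hdeg w).1
    have c2 := (hdeg z).1
    have c3 := (hdeg z).2
    have hsum' : ((A.card : ℝ) + B.card + C.card) ≤ (n:ℝ) := by exact_mod_cast hsum
    simp only [hA, hB, hC] at hsum'
    linarith
  intro x
  obtain ⟨a, z, hxa, hxz, haz⟩ := key x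
  obtain ⟨b, y, hzb, hzy, hby⟩ := key z
  have noloop : ∀ v : V, ¬ Adj v v := fun v hv => horient v v hv hv
  have hxa' : x ≠ a := fun e => noloop x (e ▸ hxa)
  have hxz' : x ≠ z := fun e => noloop x (e ▸ hxz)
  have haz' : a ≠ z := fun e => noloop a (e ▸ haz)
  have hzb' : z ≠ b := fun e => noloop z (e ▸ hzb)
  have hzy' : z ≠ y := fun e => noloop z (e ▸ hzy)
  have hby' : b ≠ y := fun e => noloop b (e ▸ hby)
  have hbx : b ≠ x := fun e => horient x z hxz (e ▸ hzb)
  have hyx : y ≠ x := fun e => horient x z hxz (e ▸ hzy)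
  have hba : b ≠ a := fun e => horient a z haz (e ▸ hzb)
  have hya : y ≠ a := fun e => horient a z haz (e ▸ hzy)
  refine ⟨y, z, a, b, ?_, hxa, hxz, haz, hzb, hzy, hby⟩
  simp only [List.nodup_cons, List.mem_cons, List.mem_singleton, List.not_mem_nil,
    List.nodup_nil, and_true, not_or, or_false]
  tauto
end

section
/- Let D be an oriented graph on n vertices with δ⁰(D) ≥ n/3 + k + 3q, where H is a digraph on k vertices and q arcs (n sufficiently large relative to k, q). Then D is H-linked: for every injective map f : V(H) → V(D) there are internally vertex-disjoint directed paths in D, one path g(uv) from f(u) to f(v) for each arc uv of H, such that the interiors of the paths avoid the image of f and each other. -/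
open Finset

set_option linter.unusedSectionVars false
set_option linter.unusedVariables false

section stmt18aux

variable {V : Type} [Fintype V] [DecidableEq V]


lemma stmt18_exists_small_out (R : V → V → Prop) [DecidableRel R]
    (hasym : ∀ a b : V, R a b → ¬ R b a) (A : Finset V) (hA : A.Nonempty) :
    ∃ x ∈ A, 2 * (A.filter fun z => R x z).card + 1 ≤ A.card := by
  by_contra hcon
  push_neg at hcon
  set E : Finset (V × V) := (A ×ˢ A).filter (fun p => R p.1 p.2) with hE
  have hmemE : ∀ p : V × V, p ∈ E ↔ p.1 ∈ A ∧ p.2 ∈ A ∧ R p.1 p.2 := by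
    intro p; simp [hE, Finset.mem_filter, Finset.mem_product, and_assoc]
  have hfib : E.card = ∑ x ∈ A, (A.filter fun z => R x z).card := by
    rw [Finset.card_eq_sum_card_fiberwise (f := Prod.fst) (t := A)
      (fun p hp => ((hmemE p).1 hp).1)]
    refine Finset.sum_congr rfl fun x hx => ?_
    refine Finset.card_nbij' (fun p => p.2) (fun z => (x, z)) ?_ ?_ ?_ ?_
    · intro p hp
      simp only [Finset.mem_coe, Finset.mem_filter] at hp ⊢
      obtain ⟨hpE, hfst⟩ := hp
      obtain ⟨h1, h2, h3⟩ := (hmemE p).1 hpE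
      exact ⟨h2, by rwa [hfst] at h3⟩
    · intro z hz
      simp only [Finset.mem_coe, Finset.mem_filter] at hz
      exact Finset.mem_filter.2 ⟨(hmemE (x, z)).2 ⟨hx, hz.1, hz.2⟩, rfl⟩
    · intro p hp
      simp only [Finset.mem_coe, Finset.mem_filter] at hp
      exact Prod.ext hp.2.symm rfl
    · intro z hz; rfl
  have hswapcard : (E.image Prod.swap).card = E.card :=
    Finset.card_image_of_injective E Prod.swap_injective
  have hdisj : Disjoint E (E.image Prod.swap) := by
    rw [Finset.disjoint_left]
    rintro ⟨p1, p2⟩ hp hq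
    simp only [Finset.mem_image] at hq
    obtain ⟨r, hr, hrs⟩ := hq
    have h1 := ((hmemE _).1 hp).2.2
    have h2 := ((hmemE _).1 hr).2.2
    have : r = (p2, p1) := by
      have := congrArg Prod.swap hrs
      simpa using this
    rw [this] at h2
    exact hasym _ _ h1 h2
  have hsub : E ∪ E.image Prod.swap ⊆ A.offDiag := by
    rintro ⟨p1, p2⟩ hp
    rw [Finset.mem_offDiag]
    rcases Finset.mem_union.1 hp with h | h
    · obtain ⟨h1, h2, h3⟩ := (hmemE _).1 h
      dsimp only at h1 h2 h3
      refine ⟨h1, h2, fun hne => ?_⟩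
      simp only at hne
      subst hne
      exact hasym _ _ h3 h3
    · simp only [Finset.mem_image] at h
      obtain ⟨⟨r1, r2⟩, hr, hrs⟩ := h
      obtain ⟨h1, h2, h3⟩ := (hmemE _).1 hr
      dsimp only at h1 h2 h3
      have e1 : p1 = r2 := (congrArg Prod.fst hrs).symm
      have e2 : p2 = r1 := (congrArg Prod.snd hrs).symm
      subst e1; subst e2
      refine ⟨h2, h1, fun hne => ?_⟩
      simp only at hne
      subst hne
      exact hasym _ _ h3 h3
  have h2E : 2 * E.card ≤ A.card * A.card - A.card := by
    have := Finset.card_le_card hsub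
    rw [Finset.card_union_of_disjoint hdisj, hswapcard, Finset.offDiag_card] at this
    omega
  have hsum : A.card * A.card ≤ ∑ x ∈ A, 2 * (A.filter fun z => R x z).card := by
    calc A.card * A.card = ∑ _x ∈ A, A.card := by rw [Finset.sum_const, smul_eq_mul, mul_comm]
    _ ≤ _ := Finset.sum_le_sum (fun x hx => by have := hcon x hx; omega)
  rw [← Finset.mul_sum, ← hfib] at hsum
  have hA1 : 1 ≤ A.card := Finset.card_pos.2 hA
  have h1 : A.card * A.card - A.card < A.card * A.card :=
    Nat.sub_lt (Nat.mul_pos hA1 hA1) hA1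
  exact absurd (hsum.trans h2E) (Nat.not_le.2 h1)

set_option maxHeartbeats 1000000 in
lemma stmt18_key (Adj : V → V → Prop) [DecidableRel Adj]
    (hasym : ∀ a b : V, Adj a b → ¬ Adj b a) (S : Finset V) (a b : V) (hab : a ≠ b)
    (hdeg : ∀ w : V,
      (Fintype.card V : ℝ)/3 + S.card + 5 ≤ ((univ.filter (fun z => Adj w z)).card : ℝ) ∧
      (Fintype.card V : ℝ)/3 + S.card + 5 ≤ ((univ.filter (fun z => Adj z w)).card : ℝ)) :
    ∃ p : List V, p.Nodup ∧ p.Chain' Adj ∧ p.head? = some a ∧ p.getLast? = some b ∧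
      (∀ x ∈ (p.drop 1).dropLast, x ∉ S ∧ x ≠ a ∧ x ≠ b) ∧
      ((p.drop 1).dropLast).length ≤ 3 := by
  have hirr : ∀ w : V, ¬ Adj w w := fun w h => hasym w w h h
  set n := Fintype.card V with hn
  by_cases h1 : Adj a b
  · refine ⟨[a, b], by simp [hab], by simp [List.Chain', h1], rfl, rfl, by simp, by simp⟩
  set A : Finset V := ((univ.filter (fun z => Adj a z)) \ S).erase b with hAdef
  set B : Finset V := ((univ.filter (fun z => Adj z b)) \ S).erase a with hBdef
  have hAmem : ∀ x, x ∈ A ↔ Adj a x ∧ x ∉ S ∧ x ≠ b := by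
    intro x
    simp only [hAdef, Finset.mem_erase, Finset.mem_sdiff, Finset.mem_filter, Finset.mem_univ,
      true_and]
    tauto
  have hBmem : ∀ x, x ∈ B ↔ Adj x b ∧ x ∉ S ∧ x ≠ a := by
    intro x
    simp only [hBdef, Finset.mem_erase, Finset.mem_sdiff, Finset.mem_filter, Finset.mem_univ,
      true_and]
    tauto
  have hAcard : (n : ℝ)/3 + 4 ≤ A.card := by
    have hsub : (univ.filter (fun z => Adj a z)) ⊆ insert b (A ∪ S) := by
      intro z hz
      have hz' : Adj a z := (Finset.mem_filter.1 hz).2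
      by_cases hzb : z = b
      · exact Finset.mem_insert.2 (Or.inl hzb)
      · by_cases hzS : z ∈ S
        · exact Finset.mem_insert.2 (Or.inr (Finset.mem_union_right _ hzS))
        · exact Finset.mem_insert.2 (Or.inr (Finset.mem_union_left _
            ((hAmem z).2 ⟨hz', hzS, hzb⟩)))
    have h2 := Finset.card_le_card hsub
    have h3 := (Finset.card_insert_le b (A ∪ S)).trans
      (Nat.add_le_add_right (Finset.card_union_le A S) 1)
    have h4 := (hdeg a).1
    have : ((univ.filter (fun z => Adj a z)).card : ℝ) ≤ A.card + S.card + 1 := by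
      have := h2.trans h3
      exact_mod_cast this
    linarith
  have hBcard : (n : ℝ)/3 + 4 ≤ B.card := by
    have hsub : (univ.filter (fun z => Adj z b)) ⊆ insert a (B ∪ S) := by
      intro z hz
      have hz' : Adj z b := (Finset.mem_filter.1 hz).2
      by_cases hza : z = a
      · exact Finset.mem_insert.2 (Or.inl hza)
      · by_cases hzS : z ∈ S
        · exact Finset.mem_insert.2 (Or.inr (Finset.mem_union_right _ hzS))
        · exact Finset.mem_insert.2 (Or.inr (Finset.mem_union_left _
            ((hBmem z).2 ⟨hz', hzS, hza⟩)))
    have h2 := Finset.card_le_card hsub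
    have h3 := (Finset.card_insert_le a (B ∪ S)).trans
      (Nat.add_le_add_right (Finset.card_union_le B S) 1)
    have h4 := (hdeg b).2
    have : ((univ.filter (fun z => Adj z b)).card : ℝ) ≤ B.card + S.card + 1 := by
      have := h2.trans h3
      exact_mod_cast this
    linarith
  have hnn : (0 : ℝ) ≤ (n : ℝ) := Nat.cast_nonneg n
  have hAne : A.Nonempty := by
    have h0 : (0 : ℝ) < A.card := by linarith
    exact Finset.card_pos.1 (by exact_mod_cast h0)
  have hBne : B.Nonempty := by
    have h0 : (0 : ℝ) < B.card := by linarith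
    exact Finset.card_pos.1 (by exact_mod_cast h0)
  by_cases h2 : (A ∩ B).Nonempty
  · obtain ⟨x, hx⟩ := h2
    obtain ⟨hxA, hxB⟩ := Finset.mem_inter.1 hx
    obtain ⟨hax, hxS, hxb⟩ := (hAmem x).1 hxA
    obtain ⟨hxb', _, hxa⟩ := (hBmem x).1 hxB
    refine ⟨[a, x, b], ?_, ?_, rfl, rfl, ?_, ?_⟩
    · simp only [List.nodup_cons, List.mem_cons, List.mem_singleton, List.not_mem_nil,
        List.nodup_nil, not_or, or_false, and_true]
      tauto
    · simp [List.Chain', List.isChain_cons_cons, hax, hxb']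
    · intro y hy
      simp only [List.drop, List.dropLast, List.mem_singleton] at hy
      subst hy
      exact ⟨hxS, hxa, hxb⟩
    · simp
  by_cases h3 : ∃ x ∈ A, ∃ y ∈ B, Adj x y
  · obtain ⟨x, hxA, y, hyB, hxy⟩ := h3
    obtain ⟨hax, hxS, hxb⟩ := (hAmem x).1 hxA
    obtain ⟨hyb, hyS, hya⟩ := (hBmem y).1 hyB
    have hxa : x ≠ a := fun h => hirr a (h ▸ hax)
    have hyb' : y ≠ b := fun h => hirr b (h ▸ hyb)
    have hxyne : x ≠ y := fun h => h2 ⟨x, Finset.mem_inter.2 ⟨hxA, h ▸ hyB⟩⟩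
    refine ⟨[a, x, y, b], ?_, ?_, rfl, rfl, ?_, ?_⟩
    · simp only [List.nodup_cons, List.mem_cons, List.mem_singleton, List.not_mem_nil,
        List.nodup_nil, not_or, or_false, and_true]
      exact ⟨⟨hxa.symm, hya.symm, hab⟩, ⟨hxyne, hxb⟩, hyb', not_false⟩
    · simp [List.Chain', List.isChain_cons_cons, hax, hxy, hyb]
    · intro z hz
      simp only [List.drop, List.dropLast, List.mem_cons, List.mem_singleton,
        List.not_mem_nil, or_false] at hz
      rcases hz with hz | hz
      · subst hz; exact ⟨hxS, hxa, hxb⟩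
      · subst hz; exact ⟨hyS, hya, hyb'⟩
    · simp
  by_cases h4 : ∃ x ∈ A, ∃ y ∈ B, ∃ z : V,
      z ∉ S ∧ z ≠ a ∧ z ≠ b ∧ z ≠ x ∧ z ≠ y ∧ Adj x z ∧ Adj z y
  · obtain ⟨x, hxA, y, hyB, z, hzS, hza, hzb, hzx, hzy, hxz, hzy'⟩ := h4
    obtain ⟨hax, hxS, hxb⟩ := (hAmem x).1 hxA
    obtain ⟨hyb, hyS, hya⟩ := (hBmem y).1 hyB
    have hxa : x ≠ a := fun h => hirr a (h ▸ hax)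
    have hyb' : y ≠ b := fun h => hirr b (h ▸ hyb)
    have hxyne : x ≠ y := fun h => h2 ⟨x, Finset.mem_inter.2 ⟨hxA, h ▸ hyB⟩⟩
    refine ⟨[a, x, z, y, b], ?_, ?_, rfl, rfl, ?_, ?_⟩
    · simp only [List.nodup_cons, List.mem_cons, List.mem_singleton, List.not_mem_nil,
        List.nodup_nil, not_or, or_false, and_true]
      exact ⟨⟨hxa.symm, hza.symm, hya.symm, hab⟩, ⟨hzx.symm, hxyne, hxb⟩, ⟨hzy, hzb⟩, ⟨hyb', not_false⟩⟩
    · simp [List.Chain', List.isChain_cons_cons, hax, hxz, hzy', hyb]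
    · intro w hw
      simp only [List.drop, List.dropLast, List.mem_cons, List.mem_singleton,
        List.not_mem_nil, or_false] at hw
      rcases hw with hw | hw | hw
      · subst hw; exact ⟨hxS, hxa, hxb⟩
      · subst hw; exact ⟨hzS, hza, hzb⟩
      · subst hw; exact ⟨hyS, hya, hyb'⟩
    · simp
  -- contradiction via counting
  exfalso
  obtain ⟨x, hxA, hxdeg⟩ := stmt18_exists_small_out Adj hasym A hAne
  obtain ⟨y, hyB, hydeg⟩ : ∃ y ∈ B, 2 * (B.filter fun z => Adj z y).card + 1 ≤ B.card := by
    haveI : DecidableRel (fun p q : V => Adj q p) :=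
      fun p q => inferInstanceAs (Decidable (Adj q p))
    obtain ⟨y, hy1, hy2⟩ := stmt18_exists_small_out (fun p q => Adj q p)
      (fun p q h h' => hasym q p h h') B hBne
    refine ⟨y, hy1, ?_⟩
    convert hy2 using 3
    exact congrArg Finset.card (Finset.filter_congr_decidable _ _ _)
  have hyB' := hyB
  obtain ⟨hax, hxS, hxb⟩ := (hAmem x).1 hxA
  obtain ⟨hyb, hyS, hya⟩ := (hBmem y).1 hyB
  set T : Finset V := insert a (insert b (insert x (insert y S))) with hTdef
  have hTcard : T.card ≤ S.card + 4 := by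
    calc T.card ≤ (insert b (insert x (insert y S))).card + 1 := Finset.card_insert_le _ _
      _ ≤ ((insert x (insert y S)).card + 1) + 1 :=
          Nat.add_le_add_right (Finset.card_insert_le _ _) 1
      _ ≤ (((insert y S).card + 1) + 1) + 1 := by
          have := Finset.card_insert_le x (insert y S); omega
      _ ≤ S.card + 4 := by have := Finset.card_insert_le y S; omega
  set P : Finset V := (univ.filter (fun z => Adj x z)) \ T with hPdef
  set Q : Finset V := (univ.filter (fun z => Adj z y)) \ T with hQdef
  have hPmem : ∀ z, z ∈ P ↔ Adj x z ∧ z ∉ T := by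
    intro z; simp [hPdef, Finset.mem_sdiff, Finset.mem_filter]
  have hQmem : ∀ z, z ∈ Q ↔ Adj z y ∧ z ∉ T := by
    intro z; simp [hQdef, Finset.mem_sdiff, Finset.mem_filter]
  have hTmem : ∀ z, z ∈ T ↔ z = a ∨ z = b ∨ z = x ∨ z = y ∨ z ∈ S := by
    intro z; simp [hTdef]
  have hPcard : (n : ℝ)/3 + 1 ≤ P.card := by
    have hsub : (univ.filter (fun z => Adj x z)) ⊆ P ∪ T := by
      intro z hz
      by_cases hzT : z ∈ T
      · exact Finset.mem_union_right _ hzT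
      · exact Finset.mem_union_left _ ((hPmem z).2 ⟨(Finset.mem_filter.1 hz).2, hzT⟩)
    have h2' := (Finset.card_le_card hsub).trans (Finset.card_union_le P T)
    have h4 := (hdeg x).1
    have h5 : ((univ.filter (fun z => Adj x z)).card : ℝ) ≤ P.card + (S.card + 4) := by
      have : (univ.filter (fun z => Adj x z)).card ≤ P.card + (S.card + 4) :=
        h2'.trans (Nat.add_le_add_left hTcard P.card)
      exact_mod_cast this
    linarith
  have hQcard : (n : ℝ)/3 + 1 ≤ Q.card := by
    have hsub : (univ.filter (fun z => Adj z y)) ⊆ Q ∪ T := by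
      intro z hz
      by_cases hzT : z ∈ T
      · exact Finset.mem_union_right _ hzT
      · exact Finset.mem_union_left _ ((hQmem z).2 ⟨(Finset.mem_filter.1 hz).2, hzT⟩)
    have h2' := (Finset.card_le_card hsub).trans (Finset.card_union_le Q T)
    have h4 := (hdeg y).2
    have h5 : ((univ.filter (fun z => Adj z y)).card : ℝ) ≤ Q.card + (S.card + 4) := by
      have : (univ.filter (fun z => Adj z y)).card ≤ Q.card + (S.card + 4) :=
        h2'.trans (Nat.add_le_add_left hTcard Q.card)
      exact_mod_cast this
    linarith
  -- disjointness facts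
  have hdAB : Disjoint A B := by
    rw [Finset.disjoint_left]
    intro z hzA hzB
    exact h2 ⟨z, Finset.mem_inter.2 ⟨hzA, hzB⟩⟩
  have hdAQ : Disjoint A Q := by
    rw [Finset.disjoint_left]
    intro z hzA hzQ
    exact h3 ⟨z, hzA, y, hyB', ((hQmem z).1 hzQ).1⟩
  have hdPB : Disjoint P B := by
    rw [Finset.disjoint_left]
    intro z hzP hzB
    exact h3 ⟨x, hxA, z, hzB, ((hPmem z).1 hzP).1⟩
  have hdPQ : Disjoint P Q := by
    rw [Finset.disjoint_left]
    intro z hzP hzQ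
    obtain ⟨hxz, hzT⟩ := (hPmem z).1 hzP
    obtain ⟨hzy, _⟩ := (hQmem z).1 hzQ
    rw [hTmem] at hzT
    push_neg at hzT
    exact h4 ⟨x, hxA, y, hyB', z, hzT.2.2.2.2, hzT.1, hzT.2.1, hzT.2.2.1, hzT.2.2.2.1, hxz, hzy⟩
  have hdisjU : Disjoint (A ∪ P) (B ∪ Q) := by
    rw [Finset.disjoint_union_left]
    constructor
    · rw [Finset.disjoint_union_right]; exact ⟨hdAB, hdAQ⟩
    · rw [Finset.disjoint_union_right]; exact ⟨hdPB, hdPQ⟩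
  have hAPinter : A ∩ P ⊆ A.filter (fun z => Adj x z) := by
    intro z hz
    obtain ⟨hzA, hzP⟩ := Finset.mem_inter.1 hz
    exact Finset.mem_filter.2 ⟨hzA, ((hPmem z).1 hzP).1⟩
  have hBQinter : B ∩ Q ⊆ B.filter (fun z => Adj z y) := by
    intro z hz
    obtain ⟨hzB, hzQ⟩ := Finset.mem_inter.1 hz
    exact Finset.mem_filter.2 ⟨hzB, ((hQmem z).1 hzQ).1⟩
  have c1 : ((A ∪ P) ∪ (B ∪ Q)).card ≤ n := by
    rw [hn]
    exact Finset.card_le_univ _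
  have c2 : ((A ∪ P) ∪ (B ∪ Q)).card = (A ∪ P).card + (B ∪ Q).card :=
    Finset.card_union_of_disjoint hdisjU
  have c3 : (A ∪ P).card + (A ∩ P).card = A.card + P.card :=
    Finset.card_union_add_card_inter A P
  have c4 : (B ∪ Q).card + (B ∩ Q).card = B.card + Q.card :=
    Finset.card_union_add_card_inter B Q
  have c5 : (A ∩ P).card ≤ (A.filter (fun z => Adj x z)).card := Finset.card_le_card hAPinter
  have c6 : (B ∩ Q).card ≤ (B.filter (fun z => Adj z y)).card := Finset.card_le_card hBQinter
  have r1 : ((A ∪ P).card : ℝ) + (A ∩ P).card = A.card + P.card := by exact_mod_cast c3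
  have r2 : ((B ∪ Q).card : ℝ) + (B ∩ Q).card = B.card + Q.card := by exact_mod_cast c4
  have r3 : ((A ∩ P).card : ℝ) ≤ (A.filter (fun z => Adj x z)).card := by exact_mod_cast c5
  have r4 : ((B ∩ Q).card : ℝ) ≤ (B.filter (fun z => Adj z y)).card := by exact_mod_cast c6
  have r5 : 2 * ((A.filter (fun z => Adj x z)).card : ℝ) + 1 ≤ A.card := by exact_mod_cast hxdeg
  have r6 : 2 * ((B.filter (fun z => Adj z y)).card : ℝ) + 1 ≤ B.card := by exact_mod_cast hydeg
  have r7 : ((A ∪ P).card : ℝ) + (B ∪ Q).card ≤ n := by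
    have := c2 ▸ c1
    exact_mod_cast this
  linarith

end stmt18aux

set_option maxHeartbeats 1000000 in
theorem stmt18 (k q : ℕ) (hk : 0 < k) :
    ∃ n₀ : ℕ, ∀ (W : Type) [Fintype W] [DecidableEq W] (B : W → W → Prop) [DecidableRel B],
      Fintype.card W = k →
      (∀ w : W, ¬ B w w) →
      (((univ : Finset W) ×ˢ (univ : Finset W)).filter (fun p : W × W => B p.1 p.2)).card = q →
      ∀ (V : Type) [Fintype V] [DecidableEq V] (Adj : V → V → Prop) [DecidableRel Adj],
        (∀ a b : V, Adj a b → ¬ Adj b a) →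
        n₀ ≤ Fintype.card V →
        (∀ w : V, (Fintype.card V : ℝ)/3 + k + 3*q ≤
            ((univ.filter (fun z => Adj w z)).card : ℝ) ∧
          (Fintype.card V : ℝ)/3 + k + 3*q ≤
            ((univ.filter (fun z => Adj z w)).card : ℝ)) →
        ∀ f : W → V, Function.Injective f →
          ∃ g : W → W → List V,
            (∀ u v : W, B u v →
              (g u v).Nodup ∧ (g u v).Chain' Adj ∧
              (g u v).head? = some (f u) ∧ (g u v).getLast? = some (f v) ∧
              (∀ x ∈ ((g u v).drop 1).dropLast, ∀ w : W, x ≠ f w)) ∧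
            (∀ u v u' v' : W, B u v → B u' v' → (u, v) ≠ (u', v') →
              ∀ x ∈ ((g u v).drop 1).dropLast, x ∉ ((g u' v').drop 1).dropLast) := by
  refine ⟨1, ?_⟩
  intro W _ _ B _ hcardW hirrB hq V _ _ Adj _ hasym hn hdeg f hf
  classical
  set arcs : Finset (W × W) := (univ ×ˢ univ).filter (fun p : W × W => B p.1 p.2) with harcsdef
  have harcmem : ∀ p : W × W, p ∈ arcs ↔ B p.1 p.2 := by
    intro p
    simp [harcsdef, Finset.mem_filter, Finset.mem_product]
  have claim : ∀ T : Finset (W × W), T ⊆ arcs →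
      ∃ (g : W → W → List V) (U : Finset V),
        U.card ≤ 3 * T.card ∧ (∀ w : W, f w ∉ U) ∧
        (∀ u v : W, (u, v) ∈ T →
          (((g u v).Nodup ∧ (g u v).Chain' Adj ∧ (g u v).head? = some (f u) ∧
           (g u v).getLast? = some (f v) ∧
           (∀ x ∈ ((g u v).drop 1).dropLast, ∀ w : W, x ≠ f w)) ∧
          (∀ x ∈ ((g u v).drop 1).dropLast, x ∈ U))) ∧
        (∀ u v u' v' : W, (u, v) ∈ T → (u', v') ∈ T → (u, v) ≠ (u', v') →
          ∀ x ∈ ((g u v).drop 1).dropLast, x ∉ ((g u' v').drop 1).dropLast) := by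
    intro T
    induction T using Finset.induction_on with
    | empty =>
      intro _
      exact ⟨fun _ _ => [], ∅, by simp, by simp, by simp, by simp⟩
    | @insert e T he ih =>
      obtain ⟨u, v⟩ := e
      intro hsub
      obtain ⟨g, U, hU, hfU, hgood, hdisj⟩ := ih (fun x hx => hsub (Finset.mem_insert_of_mem hx))
      have huv : (u, v) ∈ arcs := hsub (Finset.mem_insert_self _ _)
      have hBuv : B u v := (harcmem _).1 huv
      have huv_ne : u ≠ v := fun h => hirrB v (by rw [h] at hBuv; exact hBuv)
      have hfuv : f u ≠ f v := fun h => huv_ne (hf h)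
      set X : Finset V := univ.image f ∪ U with hXdef
      set S : Finset V := (X.erase (f u)).erase (f v) with hSdef
      have hfuX : f u ∈ X := Finset.mem_union_left _ (Finset.mem_image_of_mem f (mem_univ u))
      have hfvX : f v ∈ X.erase (f u) :=
        Finset.mem_erase.2 ⟨hfuv.symm, Finset.mem_union_left _
          (Finset.mem_image_of_mem f (mem_univ v))⟩
      have hScard : S.card + 2 = X.card := by
        rw [hSdef, Finset.card_erase_of_mem hfvX, Finset.card_erase_of_mem hfuX]
        have h2 : 2 ≤ X.card := by
          have := Finset.card_le_card (Finset.insert_subset hfuX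
            (Finset.singleton_subset_iff.2 (Finset.mem_of_mem_erase hfvX)))
          simp [Finset.card_insert_of_notMem, hfuv] at this
          omega
        omega
      have hXcard : X.card ≤ k + 3 * T.card := by
        calc X.card ≤ (univ.image f).card + U.card := Finset.card_union_le _ _
          _ ≤ k + 3 * T.card := by
              have h1 : (univ.image f).card ≤ k := by
                have := Finset.card_image_le (s := (univ : Finset W)) (f := f)
                rwa [Finset.card_univ, hcardW] at this
              omega
      have hTq : T.card + 1 ≤ q := by
        have hss : T ⊂ arcs := by
          rw [Finset.ssubset_iff_of_subset (fun x hx => hsub (Finset.mem_insert_of_mem hx))]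
          exact ⟨(u, v), huv, he⟩
        have := Finset.card_lt_card hss
        rw [hq] at this
        omega
      have hS5 : (S.card : ℝ) + 5 ≤ k + 3 * q := by
        have h1 : (S.card : ℝ) + 2 ≤ k + 3 * T.card := by
          rw [show ((S.card : ℝ) + 2) = ((S.card + 2 : ℕ) : ℝ) by push_cast; ring, hScard]
          exact_mod_cast hXcard
        have h2 : (T.card : ℝ) + 1 ≤ q := by exact_mod_cast hTq
        linarith
      have hdeg' : ∀ w : V,
          (Fintype.card V : ℝ)/3 + S.card + 5 ≤ ((univ.filter (fun z => Adj w z)).card : ℝ) ∧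
          (Fintype.card V : ℝ)/3 + S.card + 5 ≤ ((univ.filter (fun z => Adj z w)).card : ℝ) := by
        intro w
        obtain ⟨hw1, hw2⟩ := hdeg w
        constructor <;> linarith
      obtain ⟨p, hnd, hch, hhd, hlast, hintS, _⟩ := stmt18_key Adj hasym S (f u) (f v) hfuv hdeg'
      -- facts about interior of p
      have hintf : ∀ x ∈ (p.drop 1).dropLast, ∀ w : W, x ≠ f w := by
        intro x hx w hxw
        obtain ⟨hxS, hxu, hxv⟩ := hintS x hx
        apply hxS
        rw [hSdef]
        refine Finset.mem_erase.2 ⟨hxv, Finset.mem_erase.2 ⟨hxu, ?_⟩⟩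
        rw [hxw]
        exact Finset.mem_union_left _ (Finset.mem_image_of_mem f (mem_univ w))
      have hintU : ∀ x ∈ (p.drop 1).dropLast, x ∉ U := by
        intro x hx hxU
        obtain ⟨hxS, hxu, hxv⟩ := hintS x hx
        apply hxS
        rw [hSdef]
        exact Finset.mem_erase.2 ⟨hxv, Finset.mem_erase.2 ⟨hxu, Finset.mem_union_right _ hxU⟩⟩
      set g' : W → W → List V := fun u' v' => if u' = u ∧ v' = v then p else g u' v' with hg'def
      have hg'uv : g' u v = p := by rw [hg'def]; simp
      have hg'old : ∀ u' v' : W, (u', v') ∈ T → g' u' v' = g u' v' := by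
        intro u' v' hmem
        have hne : ¬(u' = u ∧ v' = v) := by
          rintro ⟨rfl, rfl⟩
          exact he hmem
        rw [hg'def]
        simp [hne]
      refine ⟨g', U ∪ ((p.drop 1).dropLast).toFinset, ?_, ?_, ?_, ?_⟩
      · have h1 : ((p.drop 1).dropLast).toFinset.card ≤ 3 := by
          have := List.toFinset_card_le ((p.drop 1).dropLast)
          omega
        have h2 := Finset.card_union_le U ((p.drop 1).dropLast).toFinset
        rw [Finset.card_insert_of_notMem he]
        omega
      · intro w
        rw [Finset.mem_union]
        rintro (h | h)
        · exact hfU w h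
        · exact hintf (f w) (List.mem_toFinset.1 h) w rfl
      · intro u' v' hmem
        rcases Finset.mem_insert.1 hmem with heq | hmem'
        · have hu : u' = u := congrArg Prod.fst heq
          have hv : v' = v := congrArg Prod.snd heq
          subst hu; subst hv
          rw [hg'uv]
          exact ⟨⟨hnd, hch, hhd, hlast, hintf⟩,
            fun x hx => Finset.mem_union_right _ (List.mem_toFinset.2 hx)⟩
        · rw [hg'old u' v' hmem']
          obtain ⟨hgd, hsubU⟩ := hgood u' v' hmem'
          exact ⟨hgd, fun x hx => Finset.mem_union_left _ (hsubU x hx)⟩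
      · intro u1 v1 u2 v2 hm1 hm2 hne x hx
        rcases Finset.mem_insert.1 hm1 with heq1 | hm1' <;>
          rcases Finset.mem_insert.1 hm2 with heq2 | hm2'
        · exact absurd (heq1.trans heq2.symm) hne
        · have hu : u1 = u := congrArg Prod.fst heq1
          have hv : v1 = v := congrArg Prod.snd heq1
          subst hu; subst hv
          rw [hg'uv] at hx
          rw [hg'old u2 v2 hm2']
          intro hx2
          exact hintU x hx ((hgood u2 v2 hm2').2 x hx2)
        · have hu : u2 = u := congrArg Prod.fst heq2
          have hv : v2 = v := congrArg Prod.snd heq2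
          subst hu; subst hv
          rw [hg'old u1 v1 hm1'] at hx
          rw [hg'uv]
          intro hx2
          exact hintU x hx2 ((hgood u1 v1 hm1').2 x hx)
        · rw [hg'old u1 v1 hm1'] at hx
          rw [hg'old u2 v2 hm2']
          exact hdisj u1 v1 u2 v2 hm1' hm2' hne x hx
  obtain ⟨g, U, _, _, hgood, hdisj⟩ := claim arcs (fun x hx => hx)
  refine ⟨g, ?_, ?_⟩
  · intro u v hBuv
    exact (hgood u v ((harcmem (u, v)).2 hBuv)).1
  · intro u v u' v' h1 h2 hne
    exact hdisj u v u' v' ((harcmem (u, v)).2 h1) ((harcmem (u', v')).2 h2) hne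
end
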